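/- Let N ≥ 2 be an integer, M a nonzero integer, q, p ∈ ℂ with 0 < |q| < 1, 0 < |p| < 1, p^{1/2} a fixed square root of p, and c ∈ ℂ satisfying (−p^{1/2})^{NM} = q^{−c−N} (with q^{−c−N} = exp(−(c+N) log q) for a fixed branch). Define F(M,x) = ∏_{k=0}^{NM−1} F((−p^{1/2})^k x) if M > 0 and F(M,x) = ∏_{k=1}^{N|M|} F((−p^{1/2})^{−k} x)^{−1} if M < 0, where F(x) = q^{2−2/N} Θ_{q^{2N}}(x²)Θ_{q^{2N}}(x^{−2}) / (Θ_{q^{2N}}(q²x²)Θ_{q^{2N}}(q²x^{−2})). Then for all x where both sides are defined: F(M, q^{c} x) / F(M, −p^{1/2} x) = 𝒴_{N,p,q,M}(x), where 𝒴_{N,p,q,M}(x) = ∏_{k=1}^{S} [ Θ_{q^{2N}}(x² p^{−k})² Θ_{q^{2N}}(x² q² p^{k}) Θ_{q^{2N}}(x² q^{−2} p^{k}) ] / [ Θ_{q^{2N}}(x² p^{k})² Θ_{q^{2N}}(x² q² p^{−k}) Θ_{q^{2N}}(x² q^{−2} p^{−k}) ], with S = NM for M > 0 and S = N|M| − 1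 for M < 0. -/

import Mathlib

open Complex

/-- The infinite `q`-Pochhammer product `(z;p)_∞ = ∏_{n≥0} (1 − z pⁿ)`. -/
noncomputable def qPoch (z p : ℂ) : ℂ := ∏' n : ℕ, (1 - z * p ^ n)

/-- The Jacobi theta function `Θ_p(z) = (z;p)_∞ (p z⁻¹;p)_∞ (p;p)_∞`. -/
noncomputable def jTheta (p z : ℂ) : ℂ := qPoch z p * qPoch (p * z⁻¹) p * qPoch p p

/-- The quasi-periodicity factor of the gauge-transformed elliptic `sl(N)` R-matrix:
`F(x) = q^{2−2/N} Θ_{q^{2N}}(x²)Θ_{q^{2N}}(x⁻²)/(Θ_{q^{2N}}(q²x²)Θ_{q^{2N}}(q²x⁻²))`,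
where `qpow` is a fixed determination of `q^{2−2/N}`. -/
noncomputable def Ffun (N : ℕ) (q qpow : ℂ) (x : ℂ) : ℂ :=
  qpow * jTheta (q ^ (2 * N)) (x ^ 2) * jTheta (q ^ (2 * N)) (x⁻¹ ^ 2)
    / (jTheta (q ^ (2 * N)) (q ^ 2 * x ^ 2) * jTheta (q ^ (2 * N)) (q ^ 2 * x⁻¹ ^ 2))

/-- The iterated quasi-periodicity factor:
`F(M,x) = ∏_{k=0}^{NM−1} F((−p^{1/2})^k x)` for `M > 0` and
`F(M,x) = ∏_{k=1}^{N|M|} F((−p^{1/2})^{−k} x)⁻¹` for `M < 0`. -/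
noncomputable def FMfun (N : ℕ) (M : ℤ) (q qpow sq : ℂ) (x : ℂ) : ℂ :=
  if 0 < M then ∏ k ∈ Finset.range (N * M.toNat), Ffun N q qpow ((-sq) ^ k * x)
  else ∏ k ∈ Finset.Icc 1 (N * (-M).toNat), (Ffun N q qpow ((-sq) ^ (-(k : ℤ)) * x))⁻¹

/-- The exchange structure function `𝒴_{N,p,q,M}(x)` of the trace operators `t(z)`:
`𝒴(x) = ∏_{k=1}^{S} Θ(x²p^{−k})²Θ(x²q²p^k)Θ(x²q^{−2}p^k) /
(Θ(x²p^k)²Θ(x²q²p^{−k})Θ(x²q^{−2}p^{−k}))` with `S = NM` for `M>0`, `S = N|M|−1` for `M<0`. -/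
noncomputable def Yfun (N : ℕ) (M : ℤ) (q p : ℂ) (x : ℂ) : ℂ :=
  ∏ k ∈ Finset.Icc 1 (if 0 < M then N * M.toNat else N * (-M).toNat - 1),
    jTheta (q ^ (2 * N)) (x ^ 2 * p ^ (-(k : ℤ))) ^ 2
      * jTheta (q ^ (2 * N)) (x ^ 2 * q ^ 2 * p ^ (k : ℤ))
      * jTheta (q ^ (2 * N)) (x ^ 2 * q ^ (-2 : ℤ) * p ^ (k : ℤ))
      / (jTheta (q ^ (2 * N)) (x ^ 2 * p ^ (k : ℤ)) ^ 2
        * jTheta (q ^ (2 * N)) (x ^ 2 * q ^ 2 * p ^ (-(k : ℤ)))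
        * jTheta (q ^ (2 * N)) (x ^ 2 * q ^ (-2 : ℤ) * p ^ (-(k : ℤ))))

/-! With `P = q^{2N}` write `F(y) = q^{2-2/N} G(y²)`, `G(w) = Θ_P(w)Θ_P(w⁻¹)/(Θ_P(q²w)Θ_P(q²w⁻¹))`.
The quasi-periodicity `Θ_P(Pz) = -z⁻¹Θ_P(z)` makes `G` invariant under `w ↦ Pw`, and on the
surface `(q^c x)² = P⁻¹ p^{-NM} x²`. Hence every factor of `F(M, q^c x)` and of `F(M, −p^{1/2} x)`
is `q^{2-2/N} G(x² p^j)` for some integer `j`, and after reindexing the ratio is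
`∏_j G(x² p^{-j}) / G(x² p^j)` over `1 ≤ j ≤ NM`, resp. `0 ≤ j < N|M|` (the factor `j = 0` being 1).
The inversion formula `Θ_P(z⁻¹) = -z⁻¹Θ_P(z)` gives `G(w) = q⁻² Θ_P(w)²/(Θ_P(q²w)Θ_P(q⁻²w))`,
which turns each of these quotients into a factor of `𝒴`. -/

open Finset

lemma multipliable_one_sub_mul_pow {𝕜 : Type*} [NormedField 𝕜] [CompleteSpace 𝕜] (z : 𝕜) {P : 𝕜}
    (hP : ‖P‖ < 1) :
    Multipliable fun n : ℕ => 1 - z * P ^ n := by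
  simp_rw [sub_eq_add_neg]
  refine multipliable_one_add_of_summable ?_
  simpa [norm_mul, norm_pow] using
    (summable_geometric_of_lt_one (norm_nonneg P) hP).mul_left ‖z‖

section Theta

variable {P : ℂ}

lemma qPoch_eq_one_sub_mul (z : ℂ) (hP : ‖P‖ < 1) : qPoch z P = (1 - z) * qPoch (z * P) P := by
  rw [qPoch, tprod_eq_zero_mul' ?_, qPoch]
  · simp only [pow_zero, mul_one, pow_succ, mul_assoc, mul_comm P]
  · simpa only [pow_succ, mul_assoc, mul_comm P] using multipliable_one_sub_mul_pow (z * P) hP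

lemma jTheta_inv (hP : ‖P‖ < 1) {z : ℂ} (hz : z ≠ 0) : jTheta P z⁻¹ = -z⁻¹ * jTheta P z := by
  rw [jTheta, jTheta, inv_inv, qPoch_eq_one_sub_mul z⁻¹ hP, qPoch_eq_one_sub_mul z hP,
    mul_comm z⁻¹ P, mul_comm z P]
  have h : 1 - z⁻¹ = -z⁻¹ * (1 - z) := by field_simp; ring
  rw [h]; ring

lemma jTheta_mul_left_self (hP0 : P ≠ 0) (hP : ‖P‖ < 1) {z : ℂ} (hz : z ≠ 0) :
    jTheta P (P * z) = -z⁻¹ * jTheta P z := by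
  rw [← jTheta_inv hP hz, jTheta, jTheta, inv_inv, mul_inv, mul_inv_cancel_left₀ hP0]
  ring

end Theta

noncomputable def thetaRatio (P r w : ℂ) : ℂ :=
  jTheta P w * jTheta P w⁻¹ / (jTheta P (r * w) * jTheta P (r * w⁻¹))

section ThetaRatio

variable {P r : ℂ}

lemma thetaRatio_eq (hP : ‖P‖ < 1) (hr : r ≠ 0) {w : ℂ} (hw : w ≠ 0) :
    thetaRatio P r w = r⁻¹ * (jTheta P w ^ 2 / (jTheta P (r * w) * jTheta P (r⁻¹ * w))) := by
  have hrw : r * w⁻¹ = (r⁻¹ * w)⁻¹ := by rw [mul_inv, inv_inv]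
  rw [thetaRatio, hrw, jTheta_inv hP hw, jTheta_inv hP (by positivity)]
  calc _ = (-w⁻¹) / (-(r⁻¹ * w)⁻¹)
        * (jTheta P w ^ 2 / (jTheta P (r * w) * jTheta P (r⁻¹ * w))) := by ring
    _ = _ := by congr 1; field_simp

lemma thetaRatio_mul_left_self (hP0 : P ≠ 0) (hP : ‖P‖ < 1) (hr : r ≠ 0) {w : ℂ} (hw : w ≠ 0) :
    thetaRatio P r (P * w) = thetaRatio P r w := by
  rw [thetaRatio_eq hP hr (by positivity), thetaRatio_eq hP hr hw, mul_left_comm r,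
    mul_left_comm r⁻¹, jTheta_mul_left_self hP0 hP hw, jTheta_mul_left_self hP0 hP (by positivity),
    jTheta_mul_left_self hP0 hP (by positivity)]
  congr 1
  calc _ = (w⁻¹ ^ 2 * jTheta P w ^ 2) / ((r * w)⁻¹ * (r⁻¹ * w)⁻¹
        * (jTheta P (r * w) * jTheta P (r⁻¹ * w))) := by ring
    _ = _ := by
      rw [show (r * w)⁻¹ * (r⁻¹ * w)⁻¹ = w⁻¹ ^ 2 by field_simp]
      exact mul_div_mul_left _ _ (by positivity)

lemma thetaRatio_div_thetaRatio (hP : ‖P‖ < 1) (hr : r ≠ 0) {u v : ℂ} (hu : u ≠ 0) (hv : v ≠ 0) :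
    thetaRatio P r u / thetaRatio P r v
      = jTheta P u ^ 2 * jTheta P (r * v) * jTheta P (r⁻¹ * v)
        / (jTheta P v ^ 2 * jTheta P (r * u) * jTheta P (r⁻¹ * u)) := by
  rw [thetaRatio_eq hP hr hu, thetaRatio_eq hP hr hv, mul_div_mul_left _ _ (inv_ne_zero hr),
    div_div_div_eq]
  ring

lemma thetaRatio_ne_zero (hP : ‖P‖ < 1) (hr : r ≠ 0) {w : ℂ} (hw : w ≠ 0)
    (h : jTheta P w ≠ 0) (hmul : jTheta P (r * w) ≠ 0) (hinv : jTheta P (r⁻¹ * w) ≠ 0) :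
    thetaRatio P r w ≠ 0 := by
  rw [thetaRatio_eq hP hr hw]
  exact mul_ne_zero (inv_ne_zero hr) (div_ne_zero (pow_ne_zero 2 h) (mul_ne_zero hmul hinv))

end ThetaRatio

section Reindex

variable {α : Type*} [CommMonoid α]

lemma prod_range_add_one_eq_prod_Icc (g : ℤ → α) (L : ℕ) :
    ∏ k ∈ range L, g (k + 1) = ∏ k ∈ Icc 1 L, g k := by
  induction L with
  | zero => simp
  | succ L ih => rw [prod_range_succ, ih, prod_Icc_succ_top (by omega)]; push_cast; rfl

lemma prod_range_sub_eq_prod_Icc_neg (g : ℤ → α) (L : ℕ) :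
    ∏ k ∈ range L, g (k - L) = ∏ k ∈ Icc 1 L, g (-k) := by
  rw [← prod_range_add_one_eq_prod_Icc (fun j => g (-j)), ← prod_range_reflect]
  refine prod_congr rfl fun k hk => congrArg g ?_
  have := mem_range.mp hk
  omega

end Reindex

section Quotients

variable {K : Type*} [Field K] {a : K}

lemma prod_mul_sub_div_prod_mul_add_one (ha : a ≠ 0) (g : ℤ → K) (L : ℕ) :
    (∏ k ∈ range L, a * g (k - L)) / ∏ k ∈ range L, a * g (k + 1)
      = ∏ k ∈ Icc 1 L, g (-k) / g k := by
  rw [prod_mul_distrib, prod_mul_distrib, mul_div_mul_left _ _ (prod_ne_zero_iff.mpr fun _ _ => ha),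
    prod_range_sub_eq_prod_Icc_neg, prod_range_add_one_eq_prod_Icc, prod_div_distrib]

lemma prod_inv_mul_sub_div_prod_inv_mul_one_sub (ha : a ≠ 0) {g : ℤ → K} (hg : g 0 ≠ 0) {L : ℕ}
    (hL : 0 < L) :
    (∏ k ∈ Icc 1 L, (a * g (L - k))⁻¹) / ∏ k ∈ Icc 1 L, (a * g (1 - k))⁻¹
      = ∏ k ∈ Icc 1 (L - 1), g (-k) / g k := by
  have hnum : ∏ k ∈ Icc 1 L, g (L - k) = ∏ k ∈ range L, g k := by
    simpa only [add_sub_cancel, ← sub_eq_add_neg] using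
      (prod_range_sub_eq_prod_Icc_neg (fun j => g (L + j)) L).symm
  have hden : ∏ k ∈ Icc 1 L, g (1 - k) = ∏ k ∈ range L, g (-k) := by
    simpa only [sub_add_cancel_right] using
      (prod_range_add_one_eq_prod_Icc (fun j => g (1 - j)) L).symm
  obtain ⟨n, rfl⟩ := Nat.exists_eq_add_of_lt hL
  rw [prod_inv_distrib, prod_inv_distrib, inv_div_inv, prod_mul_distrib, prod_mul_distrib,
    mul_div_mul_left _ _ (prod_ne_zero_iff.mpr fun _ _ => ha), hnum, hden, ← prod_div_distrib,
    zero_add, prod_range_succ', Nat.cast_zero, neg_zero, div_self hg, mul_one, Nat.add_sub_cancel,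
    ← prod_range_add_one_eq_prod_Icc (fun j => g (-j) / g j)]
  push_cast
  rfl

end Quotients

lemma Ffun_eq_mul_thetaRatio (N : ℕ) (q qpow y : ℂ) :
    Ffun N q qpow y = qpow * thetaRatio (q ^ (2 * N)) (q ^ 2) (y ^ 2) := by
  rw [Ffun, thetaRatio, inv_pow]; ring

lemma Yfun_eq_prod_thetaRatio_div {N : ℕ} {q p x : ℂ} (M : ℤ) (hq : q ≠ 0) (hp : p ≠ 0)
    (hx : x ≠ 0) (hP : ‖q ^ (2 * N)‖ < 1) :
    Yfun N M q p x = ∏ k ∈ Icc 1 (if 0 < M then N * M.toNat else N * (-M).toNat - 1),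
      thetaRatio (q ^ (2 * N)) (q ^ 2) (x ^ 2 * p ^ (-(k : ℤ)))
        / thetaRatio (q ^ (2 * N)) (q ^ 2) (x ^ 2 * p ^ (k : ℤ)) := by
  refine prod_congr rfl fun k _ => ?_
  rw [thetaRatio_div_thetaRatio hP (pow_ne_zero 2 hq) (by positivity) (by positivity),
    zpow_neg q, zpow_ofNat]
  ring_nf

lemma neg_zpow_sq {K : Type*} [DivisionRing K] (s : K) (k : ℤ) : ((-s) ^ k) ^ 2 = (s ^ 2) ^ k := by
  rw [← zpow_natCast, ← zpow_mul, mul_comm, zpow_mul, zpow_natCast, neg_sq]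

lemma exp_sq_of_surface {N : ℕ} {M : ℤ} {q p sq c lq : ℂ} (hsq : sq ^ 2 = p)
    (hlq : exp lq = q) (hsurf : (-sq) ^ ((N : ℤ) * M) = exp (-(c + (N : ℂ)) * lq)) :
    exp (c * lq) ^ 2 = (q ^ (2 * N))⁻¹ * p ^ (-((N : ℤ) * M)) := by
  have h : exp (c * lq) * (-sq) ^ ((N : ℤ) * M) * q ^ N = 1 := by
    rw [hsurf, ← hlq, ← exp_nat_mul, ← exp_add, ← exp_add, ← exp_zero]
    ring_nf
  have h2 : exp (c * lq) ^ 2 * (p ^ ((N : ℤ) * M) * q ^ (2 * N)) = 1 :=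
    calc _ = (exp (c * lq) * (-sq) ^ ((N : ℤ) * M) * q ^ N) ^ 2 := by
          rw [mul_pow, mul_pow, neg_zpow_sq, hsq, ← pow_mul, mul_comm N 2]; ring
      _ = 1 := by rw [h, one_pow]
  rw [eq_inv_of_mul_eq_one_left h2, mul_inv, zpow_neg, mul_comm]

theorem stmt11_general (N : ℕ) (hN : 2 ≤ N) (M : ℤ) (hM : M ≠ 0) (q p sq qpow c lq : ℂ)
    (hq0 : 0 < ‖q‖) (hq1 : ‖q‖ < 1)
    (hp0 : 0 < ‖p‖)
    (hsq : sq ^ 2 = p) (hqpow : qpow ^ N = q ^ (2 * N - 2))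
    (hlq : Complex.exp lq = q)
    (hsurf : (-sq) ^ ((N : ℤ) * M) = Complex.exp (-(c + (N : ℂ)) * lq))
    (x : ℂ) (hx : x ≠ 0)
    (hdef : ∀ a b : ℤ, jTheta (q ^ (2 * N)) (q ^ a * p ^ b * x ^ 2) ≠ 0
      ∧ jTheta (q ^ (2 * N)) (q ^ a * p ^ b * x⁻¹ ^ 2) ≠ 0) :
    FMfun N M q qpow sq (Complex.exp (c * lq) * x) / FMfun N M q qpow sq (-sq * x)
      = Yfun N M q p x := by
  have hq : q ≠ 0 := norm_pos_iff.mp hq0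
  have hp : p ≠ 0 := norm_pos_iff.mp hp0
  have hP : ‖q ^ (2 * N)‖ < 1 := by
    rw [norm_pow]; exact pow_lt_one₀ (norm_nonneg q) hq1 (by omega)
  have hqpow0 : qpow ≠ 0 := by
    rintro rfl
    exact pow_ne_zero _ hq (hqpow.symm.trans (zero_pow (by omega)))
  have hP0 : q ^ (2 * N) ≠ 0 := pow_ne_zero _ hq
  set g : ℤ → ℂ := fun j => thetaRatio (q ^ (2 * N)) (q ^ 2) (x ^ 2 * p ^ j)
  have hnum (k : ℤ) : Ffun N q qpow ((-sq) ^ k * (exp (c * lq) * x)) = qpow * g (k - N * M) := by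
    rw [Ffun_eq_mul_thetaRatio, mul_pow, mul_pow, neg_zpow_sq, hsq, exp_sq_of_surface hsq hlq hsurf,
      show p ^ k * ((q ^ (2 * N))⁻¹ * p ^ (-((N : ℤ) * M)) * x ^ 2)
        = (q ^ (2 * N))⁻¹ * (x ^ 2 * p ^ (k - N * M)) by rw [sub_eq_add_neg, zpow_add₀ hp]; ring,
      ← thetaRatio_mul_left_self hP0 hP (pow_ne_zero 2 hq) (by positivity),
      mul_inv_cancel_left₀ hP0]
  have hden (k : ℤ) : Ffun N q qpow ((-sq) ^ k * (-sq * x)) = qpow * g (k + 1) := by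
    rw [Ffun_eq_mul_thetaRatio, mul_pow, mul_pow, neg_zpow_sq, neg_sq, hsq]
    simp only [g, zpow_add_one₀ hp]
    ring_nf
  rw [Yfun_eq_prod_thetaRatio_div M hq hp hx hP]
  rcases hM.lt_or_gt with hM | hM
  · have hNM : (N : ℤ) * M = -↑(N * (-M).toNat) := by
      push_cast [Int.toNat_of_nonneg (neg_nonneg.mpr hM.le)]; ring
    simp only [FMfun, if_neg hM.not_gt, hnum, hden, hNM, sub_neg_eq_add, neg_add_eq_sub]
    have hg0 : g 0 ≠ 0 := thetaRatio_ne_zero hP (pow_ne_zero 2 hq) (by positivity)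
      (by simpa using (hdef 0 0).1) (by simpa using (hdef 2 0).1) (by simpa using (hdef (-2) 0).1)
    exact prod_inv_mul_sub_div_prod_inv_mul_one_sub hqpow0 hg0 (Nat.mul_pos (by omega) (by omega))
  · have hNM : (N : ℤ) * M = ↑(N * M.toNat) := by push_cast [Int.toNat_of_nonneg hM.le]; rfl
    simp only [FMfun, if_pos hM, ← zpow_natCast (-sq), hnum, hden, hNM]
    exact prod_mul_sub_div_prod_mul_add_one hqpow0 g _

/-- On the surface `Σ_{N,M}`, i.e. when `(−p^{1/2})^{NM} = q^{−c−N}`, the ratio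
`F(M, q^c x)/F(M, −p^{1/2} x)` equals the exchange function `𝒴_{N,p,q,M}(x)`. -/
theorem stmt11 (N : ℕ) (hN : 2 ≤ N) (M : ℤ) (hM : M ≠ 0) (q p sq qpow c lq : ℂ)
    (hq0 : 0 < ‖q‖) (hq1 : ‖q‖ < 1)
    (hp0 : 0 < ‖p‖) (hp1 : ‖p‖ < 1)
    (hsq : sq ^ 2 = p) (hqpow : qpow ^ N = q ^ (2 * N - 2))
    (hlq : Complex.exp lq = q)
    (hsurf : (-sq) ^ ((N : ℤ) * M) = Complex.exp (-(c + (N : ℂ)) * lq))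
    (x : ℂ) (hx : x ≠ 0)
    (hdef : ∀ a b : ℤ, jTheta (q ^ (2 * N)) (q ^ a * p ^ b * x ^ 2) ≠ 0
      ∧ jTheta (q ^ (2 * N)) (q ^ a * p ^ b * x⁻¹ ^ 2) ≠ 0) :
    FMfun N M q qpow sq (Complex.exp (c * lq) * x) / FMfun N M q qpow sq (-sq * x)
      = Yfun N M q p x :=
  stmt11_general N hN M hM q p sq qpow c lq hq0 hq1 hp0 hsq hqpow hlq hsurf x hx hdef
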